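/- arXiv:2203.03020 — 2 statements merged into one kernel-verified Lean document; each statement's English description precedes it below -/
import Mathlib

section
/- Under consistency (Y = Y^A a.s.) and positivity, E[Y^{g_sup}] ≥ E[Y], where Y^{g_sup}(ω) = Y^{g_sup(A(ω), L(ω))}(ω). If additionally L-exchangeability holds, then also E[Y^{g_opt}] ≥ E[Y], where Y^{g_opt}(ω) = Y^{g_opt(L(ω))}(ω). -/
open scoped Classical
open Finset

noncomputable def pr {Ω : Type*} [Fintype Ω] (p : Ω → ℝ) (E : Ω → Prop) : ℝ :=
  ∑ ω, if E ω then p ω else 0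

noncomputable def cex {Ω : Type*} [Fintype Ω] (p : Ω → ℝ) (f : Ω → ℝ) (E : Ω → Prop) : ℝ :=
  (∑ ω, if E ω then p ω * f ω else 0) / pr p E

noncomputable def ex {Ω : Type*} [Fintype Ω] (p : Ω → ℝ) (f : Ω → ℝ) : ℝ :=
  ∑ ω, p ω * f ω

noncomputable def cpr {Ω : Type*} [Fintype Ω] (p : Ω → ℝ) (E F : Ω → Prop) : ℝ :=
  pr p (fun ω => E ω ∧ F ω) / pr p F

lemma pr_nonneg {Ω : Type*} [Fintype Ω] (p : Ω → ℝ) (hp : ∀ ω, 0 ≤ p ω) (E : Ω → Prop) :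
    0 ≤ pr p E := by
  apply Finset.sum_nonneg; intro ω _; split <;> simp [hp ω]

lemma pr_eq_zero {Ω : Type*} [Fintype Ω] (p : Ω → ℝ) (hp : ∀ ω, 0 ≤ p ω) (E : Ω → Prop)
    (h : pr p E = 0) : ∀ ω, E ω → p ω = 0 := by
  intro ω hω
  have := (Finset.sum_eq_zero_iff_of_nonneg (fun ω _ => by split <;> simp [hp ω])).mp h ω (Finset.mem_univ ω)
  simpa [hω] using this

lemma pr_mono {Ω : Type*} [Fintype Ω] (p : Ω → ℝ) (hp : ∀ ω, 0 ≤ p ω) (E F : Ω → Prop)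
    (h : ∀ ω, E ω → F ω) : pr p E ≤ pr p F := by
  apply Finset.sum_le_sum; intro ω _
  by_cases hE : E ω <;> simp [hE, h ω, hp ω]
  split <;> simp [hp ω]

lemma cell_sum {Ω : Type*} [Fintype Ω] (p : Ω → ℝ) (f : Ω → ℝ) (E : Ω → Prop)
    [DecidablePred E] (h : pr p E ≠ 0) :
    (∑ ω, if E ω then p ω * f ω else 0) = pr p E * cex p f E := by
  rw [cex, mul_div_cancel₀ _ h]
  exact Finset.sum_congr rfl (fun ω _ => by congr)

lemma split_sum {Ω 𝓛 : Type*} [Fintype Ω] [Fintype 𝓛] (A : Ω → Bool) (L : Ω → 𝓛)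
    (f : Bool → 𝓛 → Ω → ℝ) :
    ∑ ω, f (A ω) (L ω) ω
      = ∑ a' : Bool, ∑ l : 𝓛, ∑ ω, if A ω = a' ∧ L ω = l then f a' l ω else 0 := by
  have key : ∀ ω, f (A ω) (L ω) ω
      = ∑ a' : Bool, ∑ l : 𝓛, if A ω = a' ∧ L ω = l then f a' l ω else 0 := by
    intro ω; simp [ite_and, Finset.sum_ite_eq]
  calc ∑ ω, f (A ω) (L ω) ω
      = ∑ ω, ∑ a' : Bool, ∑ l : 𝓛, if A ω = a' ∧ L ω = l then f a' l ω else 0 := by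
        exact Finset.sum_congr rfl (fun ω _ => key ω)
    _ = ∑ a' : Bool, ∑ ω, ∑ l : 𝓛, if A ω = a' ∧ L ω = l then f a' l ω else 0 :=
        Finset.sum_comm
    _ = ∑ a' : Bool, ∑ l : 𝓛, ∑ ω, if A ω = a' ∧ L ω = l then f a' l ω else 0 :=
        Finset.sum_congr rfl (fun a' _ => Finset.sum_comm)


/-- Corollary 3: under consistency and positivity, `E[Y^{g_sup}] ≥ E[Y]`; and if
additionally L-exchangeability holds, also `E[Y^{g_opt}] ≥ E[Y]`. -/
theorem stmt4
    {Ω 𝓛 : Type*} [Fintype Ω] [Fintype 𝓛]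
    (p : Ω → ℝ) (hp : ∀ ω, 0 ≤ p ω) (hsum : ∑ ω, p ω = 1)
    (Y : Bool → Ω → ℝ) (Yo : Ω → ℝ) (A : Ω → Bool) (L : Ω → 𝓛)
    (gopt : 𝓛 → Bool) (gsup : Bool → 𝓛 → Bool)
    -- consistency
    (hcons : ∀ ω, 0 < p ω → Yo ω = Y (A ω) ω)
    -- positivity
    (hpos : ∀ (a : Bool) (l : 𝓛), pr p (fun ω => L ω = l) > 0 →
      pr p (fun ω => A ω = a ∧ L ω = l) > 0)
    -- `gsup a' l` maximizes `a ↦ E[Yᵃ | A = a', L = l]`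
    (hgsup : ∀ a' l, pr p (fun ω => A ω = a' ∧ L ω = l) > 0 →
      ∀ a, cex p (Y a) (fun ω => A ω = a' ∧ L ω = l) ≤
        cex p (Y (gsup a' l)) (fun ω => A ω = a' ∧ L ω = l))
    -- `gopt l` maximizes `a ↦ E[Yᵃ | L = l]`
    (hgopt : ∀ l, pr p (fun ω => L ω = l) > 0 →
      ∀ a, cex p (Y a) (fun ω => L ω = l) ≤ cex p (Y (gopt l)) (fun ω => L ω = l)) :
    ex p (fun ω => Y (gsup (A ω) (L ω)) ω) ≥ ex p Yo ∧
    ((∀ (a a' : Bool) (l : 𝓛), pr p (fun ω => A ω = a' ∧ L ω = l) > 0 →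
        cex p (Y a) (fun ω => A ω = a' ∧ L ω = l) = cex p (Y a) (fun ω => L ω = l)) →
      ex p (fun ω => Y (gopt (L ω)) ω) ≥ ex p Yo) := by

  -- rewrite E[Yo] as E[Y^{A}]
  have hYo : ex p Yo = ∑ ω, p ω * Y (A ω) ω := by
    apply Finset.sum_congr rfl
    intro ω _
    rcases (hp ω).lt_or_eq with h | h
    · rw [hcons ω h]
    · rw [← h]; ring
  have hE : ∀ (a' : Bool) (l : 𝓛), ∀ g : Bool,
      (∑ ω, if A ω = a' ∧ L ω = l then p ω * Y a' ω else 0)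
        ≤ (∑ ω, if A ω = a' ∧ L ω = l then p ω * Y (gsup a' l) ω else 0) := by
    intro a' l g
    rcases (pr_nonneg p hp (fun ω => A ω = a' ∧ L ω = l)).lt_or_eq with hpr | hpr
    · rw [cell_sum p (Y a') (fun ω => A ω = a' ∧ L ω = l) (ne_of_gt hpr),
        cell_sum p (Y (gsup a' l)) (fun ω => A ω = a' ∧ L ω = l) (ne_of_gt hpr)]
      exact mul_le_mul_of_nonneg_left (hgsup a' l hpr a') (le_of_lt hpr)
    · have hz := pr_eq_zero p hp _ hpr.symm
      have : ∀ f : Ω → ℝ, (∑ ω, if A ω = a' ∧ L ω = l then p ω * f ω else 0) = 0 := by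
        intro f; apply Finset.sum_eq_zero; intro ω _
        by_cases hc : A ω = a' ∧ L ω = l
        · simp [hc, hz ω hc]
        · simp [hc]
      rw [this, this]
  simp only [ex] at *
  constructor
  · rw [ge_iff_le, hYo,
      split_sum A L (fun a' l ω => p ω * Y a' ω),
      split_sum A L (fun a' l ω => p ω * Y (gsup a' l) ω)]
    apply Finset.sum_le_sum; intro a' _
    apply Finset.sum_le_sum; intro l _
    exact hE a' l true
  · intro hexch
    rw [ge_iff_le, hYo,
      split_sum A L (fun a' l ω => p ω * Y a' ω),
      split_sum A L (fun a' l ω => p ω * Y (gopt l) ω)]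
    apply Finset.sum_le_sum; intro a' _
    apply Finset.sum_le_sum; intro l _
    rcases (pr_nonneg p hp (fun ω => A ω = a' ∧ L ω = l)).lt_or_eq with hpr | hpr
    · have hL : pr p (fun ω => L ω = l) > 0 :=
        lt_of_lt_of_le hpr (pr_mono p hp _ _ (fun ω h => h.2))
      rw [cell_sum p (Y a') (fun ω => A ω = a' ∧ L ω = l) (ne_of_gt hpr),
        cell_sum p (Y (gopt l)) (fun ω => A ω = a' ∧ L ω = l) (ne_of_gt hpr),
        hexch a' a' l hpr, hexch (gopt l) a' l hpr]
      exact mul_le_mul_of_nonneg_left (hgopt l hL a') (le_of_lt hpr)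
    · have hz := pr_eq_zero p hp _ hpr.symm
      have h0 : ∀ f : Ω → ℝ, (∑ ω, if A ω = a' ∧ L ω = l then p ω * f ω else 0) = 0 := by
        intro f; apply Finset.sum_eq_zero; intro ω _
        by_cases hc : A ω = a' ∧ L ω = l
        · simp [hc, hz ω hc]
        · simp [hc]
      rw [h0, h0]
end

section
/- In the data-generating process with W, U, Z independent Bernoulli(1/2), A^{z} ~ Bernoulli(0.3U + 0.4 + 0.2z) for z ∈ {0,1}, Y⁰ ~ N(1−2U, 1), Y¹ ~ N(2U−1, 1) (so E[Y⁰|U] = 1−2U and E[Y¹|U] = 2U−1, and potential outcomes are conditionally independent of treatment choice given U): the observed mean under consistency satisfies E[Y] = E[Y^A] = 0.3, while the optimal regime value is max(E[Y¹], E[Y⁰]) = 0, and the superoptimal value E[Y^{g_sup}] = 0.3, where g_sup(a') = argmax_a E[Yᵃ | A=a']. In particular E[Y^{g_sup}] > E[Y^{g_opt}]. -/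
open scoped Classical
open Finset

section Helpers
variable {Ω : Type*} [Fintype Ω]

lemma ite_irrel {α : Sort*} {c : Prop} (i1 i2 : Decidable c) (x y : α) :
    @ite _ c i1 x y = @ite _ c i2 x y := by
  rw [Subsingleton.elim i1 i2]

lemma pr_congr (p : Ω → ℝ) {E F : Ω → Prop} (h : ∀ ω, E ω ↔ F ω) : pr p E = pr p F :=
  Finset.sum_congr rfl fun ω _ => if_congr (h ω) rfl rfl

lemma cex_congr (p f : Ω → ℝ) {E F : Ω → Prop} (h : ∀ ω, E ω ↔ F ω) :
    cex p f E = cex p f F := by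
  unfold cex
  rw [pr_congr p h]
  congr 1
  exact Finset.sum_congr rfl fun ω _ => if_congr (h ω) rfl rfl

lemma sum_eq_cex_mul_pr (p f : Ω → ℝ) (E : Ω → Prop) [DecidablePred E] (h : pr p E ≠ 0) :
    (∑ ω, if E ω then p ω * f ω else 0) = cex p f E * pr p E := by
  have hb : (∑ ω, if E ω then p ω * f ω else 0)
      = (∑ ω, if E ω then p ω * f ω else 0) / pr p E * pr p E := by field_simp
  rw [hb]
  congr 2
  · exact Finset.sum_congr rfl fun ω _ => ite_irrel _ _ _ _

lemma pr_def (p : Ω → ℝ) (E : Ω → Prop) [DecidablePred E] :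
    pr p E = ∑ ω, if E ω then p ω else 0 :=
  Finset.sum_congr rfl fun ω _ => ite_irrel _ _ _ _

lemma cex_def (p f : Ω → ℝ) (E : Ω → Prop) [DecidablePred E] :
    cex p f E = (∑ ω, if E ω then p ω * f ω else 0) / pr p E := by
  unfold cex
  congr 1
  exact Finset.sum_congr rfl fun ω _ => ite_irrel _ _ _ _

lemma partition_bool' (f : Ω → ℝ) (X : Ω → Bool) :
    (∑ ω, f ω) = ∑ b : Bool, ∑ ω, if X ω = b then f ω else 0 := by
  rw [Finset.sum_comm]
  refine Finset.sum_congr rfl fun ω _ => ?_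
  cases hx : X ω <;> simp [hx]

end Helpers

/-- Example 1 (Qiu et al.): in the stated data-generating process,
`E[Y] = 0.3`, the optimal-regime value is `max(E[Y¹], E[Y⁰]) = 0`, and the
superoptimal value is `E[Y^{g_sup}] = 0.3 > 0`. -/
theorem stmt14
    {Ω : Type*} [Fintype Ω]
    (p : Ω → ℝ) (hp : ∀ ω, 0 ≤ p ω) (hsum : ∑ ω, p ω = 1)
    (Y : Bool → Ω → ℝ) (Yo : Ω → ℝ) (A Z U : Ω → Bool)
    (gsup : Bool → Bool)
    -- U, Z independent Bernoulli(1/2)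
    (hUZ : ∀ u z, pr p (fun ω => U ω = u ∧ Z ω = z) = 1/4)
    -- P(A = 1 | U = u, Z = z) = 0.3·u + 0.4 + 0.2·z
    (hA : ∀ u z, cpr p (fun ω => A ω = true) (fun ω => U ω = u ∧ Z ω = z) =
      0.3 * (if u then 1 else 0) + 0.4 + 0.2 * (if z then 1 else 0))
    -- all relevant events have positive probability
    (hpos : ∀ u z a, pr p (fun ω => U ω = u ∧ Z ω = z ∧ A ω = a) > 0)
    (hApos : ∀ a', pr p (fun ω => A ω = a') > 0)
    -- conditional mean independence of potential outcomes from (A, Z) given U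
    (hmi : ∀ (a u a' z : Bool),
      cex p (Y a) (fun ω => U ω = u ∧ A ω = a' ∧ Z ω = z) =
      cex p (Y a) (fun ω => U ω = u))
    -- E[Y¹ | U = u] = 2u − 1, E[Y⁰ | U = u] = 1 − 2u
    (hY1 : ∀ u, cex p (Y true) (fun ω => U ω = u) = 2 * (if u then 1 else 0) - 1)
    (hY0 : ∀ u, cex p (Y false) (fun ω => U ω = u) = 1 - 2 * (if u then 1 else 0))
    -- consistency
    (hcons : ∀ ω, 0 < p ω → Yo ω = Y (A ω) ω)
    -- g_sup(a') maximizes a ↦ E[Yᵃ | A = a']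
    (hgsup : ∀ a' a, cex p (Y a) (fun ω => A ω = a') ≤
      cex p (Y (gsup a')) (fun ω => A ω = a')) :
    ex p Yo = 0.3 ∧
    max (ex p (Y true)) (ex p (Y false)) = 0 ∧
    ex p (fun ω => Y (gsup (A ω)) ω) = 0.3 ∧
    ex p (fun ω => Y (gsup (A ω)) ω) > max (ex p (Y true)) (ex p (Y false)) := by
  -- cell probabilities, A = true
  have hqt : ∀ u z : Bool, pr p (fun ω => U ω = u ∧ Z ω = z ∧ A ω = true)
      = (0.3 * (if u then 1 else 0) + 0.4 + 0.2 * (if z then 1 else 0)) * (1/4) := by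
    intro u z
    have h := hA u z
    unfold cpr at h
    rw [hUZ] at h
    rw [div_eq_iff (by norm_num : (1:ℝ)/4 ≠ 0)] at h
    rw [← h]
    exact pr_congr p (fun ω => by tauto)
  -- cell probabilities, A = false
  have hq14 : ∀ u z : Bool, pr p (fun ω => U ω = u ∧ Z ω = z ∧ A ω = true)
      + pr p (fun ω => U ω = u ∧ Z ω = z ∧ A ω = false) = 1/4 := by
    intro u z
    rw [← hUZ u z]
    unfold pr
    rw [← Finset.sum_add_distrib]
    refine Finset.sum_congr rfl fun ω _ => ?_
    by_cases h1 : U ω = u ∧ Z ω = z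
    · obtain ⟨e1, e2⟩ := h1
      cases ha : A ω <;> simp [e1, e2, ha]
    · have c1 : ¬(U ω = u ∧ Z ω = z ∧ A ω = true) := fun h => h1 ⟨h.1, h.2.1⟩
      have c2 : ¬(U ω = u ∧ Z ω = z ∧ A ω = false) := fun h => h1 ⟨h.1, h.2.1⟩
      simp [h1, c1, c2]
  have hqf : ∀ u z : Bool, pr p (fun ω => U ω = u ∧ Z ω = z ∧ A ω = false)
      = 1/4 - (0.3 * (if u then 1 else 0) + 0.4 + 0.2 * (if z then 1 else 0)) * (1/4) := by
    intro u z
    have h := hq14 u z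
    rw [hqt u z] at h
    linarith
  -- P(U = u) = 1/2
  have hprU : ∀ u : Bool, pr p (fun ω => U ω = u) = 1/2 := by
    intro u
    have split : pr p (fun ω => U ω = u)
        = pr p (fun ω => U ω = u ∧ Z ω = true) + pr p (fun ω => U ω = u ∧ Z ω = false) := by
      unfold pr
      rw [← Finset.sum_add_distrib]
      refine Finset.sum_congr rfl fun ω _ => ?_
      by_cases h : U ω = u
      · cases hz : Z ω <;> simp [h, hz]
      · simp [h]
    rw [split, hUZ, hUZ]
    norm_num
  have hprUne : ∀ u : Bool, pr p (fun ω => U ω = u) ≠ 0 := by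
    intro u; rw [hprU]; norm_num
  -- cell conditional expectations
  have hScell : ∀ (a u z a' : Bool),
      (∑ ω, if U ω = u ∧ Z ω = z ∧ A ω = a' then p ω * Y a ω else 0)
        = cex p (Y a) (fun ω => U ω = u) * pr p (fun ω => U ω = u ∧ Z ω = z ∧ A ω = a') := by
    intro a u z a'
    rw [sum_eq_cex_mul_pr p (Y a) (fun ω => U ω = u ∧ Z ω = z ∧ A ω = a')
      (ne_of_gt (hpos u z a'))]
    congr 1
    calc cex p (Y a) (fun ω => U ω = u ∧ Z ω = z ∧ A ω = a')
        = cex p (Y a) (fun ω => U ω = u ∧ A ω = a' ∧ Z ω = z) :=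
          cex_congr _ _ (fun ω => by tauto)
      _ = _ := hmi a u a' z
  -- conditional expectations given U, as sums
  have hScellU : ∀ (a u : Bool),
      (∑ ω, if U ω = u then p ω * Y a ω else 0)
        = cex p (Y a) (fun ω => U ω = u) * pr p (fun ω => U ω = u) := by
    intro a u
    exact sum_eq_cex_mul_pr p (Y a) (fun ω => U ω = u) (hprUne u)
  -- master decomposition of a full sum over the 8 cells
  have master : ∀ f : Ω → ℝ, (∑ ω, f ω)
      = ∑ u : Bool, ∑ z : Bool, ∑ a : Bool,
          ∑ ω, if U ω = u ∧ Z ω = z ∧ A ω = a then f ω else 0 := by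
    intro f
    have pt : ∀ ω, f ω = ∑ u : Bool, ∑ z : Bool, ∑ a : Bool,
        (if U ω = u ∧ Z ω = z ∧ A ω = a then f ω else 0) := by
      intro ω
      cases h1 : U ω <;> cases h2 : Z ω <;> cases h3 : A ω <;> simp [h1, h2, h3]
    calc (∑ ω, f ω) = ∑ ω, ∑ u : Bool, ∑ z : Bool, ∑ a : Bool,
        (if U ω = u ∧ Z ω = z ∧ A ω = a then f ω else 0) :=
          Finset.sum_congr rfl fun ω _ => pt ω
      _ = _ := by
          rw [Finset.sum_comm]
          refine Finset.sum_congr rfl fun u _ => ?_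
          rw [Finset.sum_comm]
          refine Finset.sum_congr rfl fun z _ => ?_
          rw [Finset.sum_comm]
  -- decomposition of a sum over {A = a'} over the 4 (u,z)-cells
  have masterA : ∀ (f : Ω → ℝ) (a' : Bool), (∑ ω, if A ω = a' then f ω else 0)
      = ∑ u : Bool, ∑ z : Bool,
          ∑ ω, if U ω = u ∧ Z ω = z ∧ A ω = a' then f ω else 0 := by
    intro f a'
    have pt : ∀ ω, (if A ω = a' then f ω else 0) = ∑ u : Bool, ∑ z : Bool,
        (if U ω = u ∧ Z ω = z ∧ A ω = a' then f ω else 0) := by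
      intro ω
      cases h1 : U ω <;> cases h2 : Z ω <;> by_cases h3 : A ω = a' <;> simp [h1, h2, h3]
    calc (∑ ω, if A ω = a' then f ω else 0)
        = ∑ ω, ∑ u : Bool, ∑ z : Bool,
            (if U ω = u ∧ Z ω = z ∧ A ω = a' then f ω else 0) :=
          Finset.sum_congr rfl fun ω _ => pt ω
      _ = _ := by
          rw [Finset.sum_comm]
          refine Finset.sum_congr rfl fun u _ => ?_
          rw [Finset.sum_comm]
  -- E[Y^A] = 0.3
  have hEYA : (∑ ω, p ω * Y (A ω) ω) = 0.3 := by
    rw [master (fun ω => p ω * Y (A ω) ω)]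
    have step : ∀ u z a : Bool,
        (∑ ω, if U ω = u ∧ Z ω = z ∧ A ω = a then p ω * Y (A ω) ω else 0)
          = cex p (Y a) (fun ω => U ω = u) * pr p (fun ω => U ω = u ∧ Z ω = z ∧ A ω = a) := by
      intro u z a
      rw [← hScell a u z a]
      refine Finset.sum_congr rfl fun ω _ => ?_
      by_cases h : U ω = u ∧ Z ω = z ∧ A ω = a
      · simp [h, h.2.2]
      · simp [h]
    simp only [step, Fintype.sum_bool, hqt, hqf, hY1, hY0]
    norm_num
  -- E[Y^a] = 0 for both a
  have hEY1 : ex p (Y true) = 0 := by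
    unfold ex
    rw [partition_bool' (fun ω => p ω * Y true ω) U, Fintype.sum_bool]
    simp only [hScellU]
    rw [hprU, hprU, hY1, hY1]
    norm_num
  have hEY0 : ex p (Y false) = 0 := by
    unfold ex
    rw [partition_bool' (fun ω => p ω * Y false ω) U, Fintype.sum_bool]
    simp only [hScellU]
    rw [hprU, hprU, hY0, hY0]
    norm_num
  -- P(A = a') as sum of cell probabilities
  have cellpr : ∀ u z a' : Bool,
      (∑ ω, if U ω = u ∧ Z ω = z ∧ A ω = a' then p ω else 0)
        = pr p (fun ω => U ω = u ∧ Z ω = z ∧ A ω = a') :=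
    fun u z a' => Finset.sum_congr rfl fun ω _ => ite_irrel _ _ _ _
  have hprAt : pr p (fun ω => A ω = true) = 0.65 := by
    rw [pr_def p (fun ω => A ω = true), masterA p true]
    simp only [cellpr, Fintype.sum_bool, hqt]
    norm_num
  have hprAf : pr p (fun ω => A ω = false) = 0.35 := by
    rw [pr_def p (fun ω => A ω = false), masterA p false]
    simp only [cellpr, Fintype.sum_bool, hqf]
    norm_num
  -- conditional expectations given A
  have hcexA : ∀ a a' : Bool,
      cex p (Y a) (fun ω => A ω = a') * pr p (fun ω => A ω = a')
        = ∑ u : Bool, ∑ z : Bool,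
            cex p (Y a) (fun ω => U ω = u) * pr p (fun ω => U ω = u ∧ Z ω = z ∧ A ω = a') := by
    intro a a'
    rw [← sum_eq_cex_mul_pr p (Y a) (fun ω => A ω = a') (ne_of_gt (hApos a')),
      masterA (fun ω => p ω * Y a ω) a']
    simp only [hScell]
  have hctt : cex p (Y true) (fun ω => A ω = true) = 3/13 := by
    have h := hcexA true true
    rw [hprAt] at h
    simp only [Fintype.sum_bool, hqt, hY1] at h
    norm_num at h
    linarith
  have hcft : cex p (Y false) (fun ω => A ω = true) = -(3/13) := by
    have h := hcexA false true
    rw [hprAt] at h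
    simp only [Fintype.sum_bool, hqt, hY0] at h
    norm_num at h
    linarith
  have hctf : cex p (Y true) (fun ω => A ω = false) = -(3/7) := by
    have h := hcexA true false
    rw [hprAf] at h
    simp only [Fintype.sum_bool, hqf, hY1] at h
    norm_num at h
    linarith
  have hcff : cex p (Y false) (fun ω => A ω = false) = 3/7 := by
    have h := hcexA false false
    rw [hprAf] at h
    simp only [Fintype.sum_bool, hqf, hY0] at h
    norm_num at h
    linarith
  -- determine gsup
  have hg1 : gsup true = true := by
    cases h : gsup true with
    | true => rfl
    | false =>
      have hle := hgsup true true
      rw [h, hctt, hcft] at hle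
      norm_num at hle
  have hg0 : gsup false = false := by
    cases h : gsup false with
    | false => rfl
    | true =>
      have hle := hgsup false false
      rw [h, hcff, hctf] at hle
      norm_num at hle
  -- assemble
  have hYo : ex p Yo = 0.3 := by
    unfold ex
    have pt : ∀ ω, p ω * Yo ω = p ω * Y (A ω) ω := by
      intro ω
      rcases (hp ω).lt_or_eq with h | h
      · rw [hcons ω h]
      · rw [← h]; ring
    rw [Finset.sum_congr rfl fun ω _ => pt ω]
    exact hEYA
  have hGs : ex p (fun ω => Y (gsup (A ω)) ω) = 0.3 := by
    unfold ex
    have pt : ∀ ω, p ω * Y (gsup (A ω)) ω = p ω * Y (A ω) ω := by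
      intro ω
      cases h : A ω <;> simp [h, hg1, hg0]
    rw [Finset.sum_congr rfl fun ω _ => pt ω]
    exact hEYA
  refine ⟨hYo, ?_, hGs, ?_⟩
  · rw [hEY1, hEY0]; norm_num
  · rw [hGs, hEY1, hEY0]; norm_num
end
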